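/- Shape-Tree Lemma, interval part: let Λ ∈ FN_m(n), ψ : [n] → [ℓ] strictly increasing, and suppose ψ(0) < α < β ≤ ψ(n) with {α,…,β−1} ∩ im(ψ) = ∅. Then (σ^{ψΛ})⁻¹(β) − (σ^{ψΛ})⁻¹(α) = β − α, and for all t with (σ^{ψΛ})⁻¹(α) ≤ t ≤ (σ^{ψΛ})⁻¹(β) − 1 one has a^{ψΛ}_t = m−1. -/
import Mathlib


/-- The simplicial coface map `d_u`, the strictly increasing map skipping `u`. -/
def cofaceN (u p : ℕ) : ℕ := if p < u then p else p + 1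

/-- The simplicial codegeneracy map `s_u`, identifying `u` and `u+1`. -/
def codegN (u x : ℕ) : ℕ := if x ≤ u then x else x - 1

/-- The data of a Fox–Neuwirth tree: a label permutation `perm` of `{1,…,n}`
(with inverse `inv`) and depth indices `depth k` (for `1 ≤ k ≤ n−1`). -/
structure PreTree where
  perm : ℕ → ℕ
  inv : ℕ → ℕ
  depth : ℕ → ℕ

/-- Well-formedness: `Λ` is a Fox–Neuwirth tree of height `m` on `n` leaves, i.e.
`perm` is a permutation of `{1,…,n}` with two-sided inverse `inv`, and the depth
indices lie in `{0,…,m−1}`. -/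
def PreTree.Wf (m n : ℕ) (Λ : PreTree) : Prop :=
  (∀ k, 1 ≤ k → k ≤ n →
    1 ≤ Λ.perm k ∧ Λ.perm k ≤ n ∧ Λ.inv (Λ.perm k) = k ∧
    1 ≤ Λ.inv k ∧ Λ.inv k ≤ n ∧ Λ.perm (Λ.inv k) = k) ∧
  (∀ k, 1 ≤ k → k + 1 ≤ n → Λ.depth k < m)

/-- The cosimplicial coface action `d_i : FN_m(n) → FN_m(n+1)` on Fox–Neuwirth trees:
`d_0` inserts a new leftmost leaf labeled `1` joined at depth `m−1`; `d_{n+1}` inserts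
a new rightmost leaf labeled `n+1` joined at depth `m−1`; an internal `d_i`
(`0 < i < n+1`) doubles the leaf labeled `i`, inserting `i+1` immediately to its right
at depth `m−1` and relabeling larger labels. -/
def coface (m n i : ℕ) (Λ : PreTree) : PreTree :=
  if i = 0 then
    { perm := fun k => if k = 1 then 1 else Λ.perm (k - 1) + 1
      inv := fun t => if t = 1 then 1 else Λ.inv (t - 1) + 1
      depth := fun k => if k = 1 then m - 1 else Λ.depth (k - 1) }
  else if i = n + 1 then
    { perm := fun k => if k = n + 1 then n + 1 else Λ.perm k
      inv := fun t => if t = n + 1 then n + 1 else Λ.inv t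
      depth := fun k => if k = n then m - 1 else Λ.depth k }
  else
    { perm := fun k => if k = Λ.inv i then i else cofaceN i (Λ.perm (codegN (Λ.inv i) k))
      inv := fun t => if t = i then Λ.inv i else cofaceN (Λ.inv i) (Λ.inv (codegN i t))
      depth := fun k => if k = Λ.inv i then m - 1 else Λ.depth (codegN (Λ.inv i) k) }

/-- `Transforms m n ℓ ψ Λ Γ` : the strictly increasing map `ψ : [n] → [ℓ]` is realized
as a composition of cofaces, and `Γ = ψΛ` is the Fox–Neuwirth tree obtained by applying
the corresponding cofaces to `Λ`. -/
inductive Transforms (m : ℕ) : ℕ → ℕ → (ℕ → ℕ) → PreTree → PreTree → Prop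
  | refl (n : ℕ) (Λ : PreTree) : Transforms m n n id Λ Λ
  | step {n ℓ : ℕ} {ψ : ℕ → ℕ} {Λ Γ : PreTree} (k : ℕ) (hk : k ≤ ℓ + 1)
      (h : Transforms m n ℓ ψ Λ Γ) :
      Transforms m n (ℓ + 1) (fun t => cofaceN k (ψ t)) Λ (coface m ℓ k Γ)

/-- The morphism `ψ` twisted by `Λ`: `ψ^Λ(0) = ψ(0)` and
`ψ^Λ(s) = (σ^{ψΛ})⁻¹(ψ(σ^Λ(s)))` for `s ≥ 1`, where `Γ = ψΛ`. -/
def twisted (ψ : ℕ → ℕ) (Λ Γ : PreTree) : ℕ → ℕ :=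
  fun s => if s = 0 then ψ 0 else Γ.inv (ψ (Λ.perm s))

lemma cofaceN_lt {u p : ℕ} (h : p < u) : cofaceN u p = p := by simp [cofaceN, h]
lemma cofaceN_ge {u p : ℕ} (h : u ≤ p) : cofaceN u p = p + 1 := by simp [cofaceN]; omega
lemma cofaceN_le_succ (u p : ℕ) : cofaceN u p ≤ p + 1 := by unfold cofaceN; split <;> omega
lemma le_cofaceN (u p : ℕ) : p ≤ cofaceN u p := by unfold cofaceN; split <;> omega
lemma cofaceN_ne (u p : ℕ) : cofaceN u p ≠ u := by unfold cofaceN; split <;> omega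
lemma codegN_le {u t : ℕ} (h : t ≤ u) : codegN u t = t := by simp [codegN, h]
lemma codegN_gt {u t : ℕ} (h : u < t) : codegN u t = t - 1 := by simp [codegN]; omega
lemma codeg_coface (u p : ℕ) : codegN u (cofaceN u p) = p := by
  unfold cofaceN codegN; split <;> split <;> omega
lemma coface_codeg {u t : ℕ} (h : t ≠ u) : cofaceN u (codegN u t) = t := by
  unfold cofaceN codegN; split <;> split <;> omega

def permWf (n : ℕ) (Γ : PreTree) : Prop :=
  ∀ k, 1 ≤ k → k ≤ n → 1 ≤ Γ.perm k ∧ Γ.perm k ≤ n ∧ Γ.inv (Γ.perm k) = k ∧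
    1 ≤ Γ.inv k ∧ Γ.inv k ≤ n ∧ Γ.perm (Γ.inv k) = k

lemma permWf_coface (m ℓ k : ℕ) (Γ : PreTree) (hΓ : permWf ℓ Γ) (hk : k ≤ ℓ + 1) :
    permWf (ℓ + 1) (coface m ℓ k Γ) := by
  by_cases h0 : k = 0
  · subst h0
    simp only [coface, eq_self_iff_true, if_true]
    intro t ht1 htl
    by_cases h1 : t = 1
    · subst h1; simp
    · obtain ⟨p1, p2, p3, p4, p5, p6⟩ := hΓ (t - 1) (by omega) (by omega)
      have e1 : Γ.perm (t - 1) + 1 ≠ 1 := by omega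
      have e2 : Γ.inv (t - 1) + 1 ≠ 1 := by omega
      simp only [if_neg h1, if_neg e1, if_neg e2, Nat.add_sub_cancel, p3, p6]
      omega
  · by_cases hl : k = ℓ + 1
    · subst hl
      simp only [coface, if_neg h0, eq_self_iff_true, if_true]
      intro t ht1 htl
      by_cases h1 : t = ℓ + 1
      · subst h1; simp
      · obtain ⟨p1, p2, p3, p4, p5, p6⟩ := hΓ t (by omega) (by omega)
        have e1 : Γ.perm t ≠ ℓ + 1 := by omega
        have e2 : Γ.inv t ≠ ℓ + 1 := by omega
        simp only [if_neg h1, if_neg e1, if_neg e2, p3, p6]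
        exact ⟨p1, by omega, trivial, p4, by omega, trivial⟩
    · obtain ⟨q1, q2, q3, q4, q5, q6⟩ := hΓ k (by omega) (by omega)
      set j := Γ.inv k with hj
      simp only [coface, if_neg h0, if_neg hl, ← hj]
      intro t ht1 htl
      dsimp only
      constructor
      · -- 1 ≤ perm' t
        split
        · omega
        · have := le_cofaceN k (Γ.perm (codegN j t))
          have := (hΓ (codegN j t) (by unfold codegN; split <;> omega)
            (by unfold codegN; split <;> omega)).1
          omega
      refine ⟨?_, ?_, ?_, ?_, ?_⟩
      · -- perm' t ≤ ℓ + 1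
        split
        · omega
        · have := cofaceN_le_succ k (Γ.perm (codegN j t))
          have := (hΓ (codegN j t) (by unfold codegN; split <;> omega)
            (by unfold codegN; split <;> omega)).2.1
          omega
      · -- inv' (perm' t) = t
        by_cases htj : t = j
        · subst htj; simp
        · rw [if_neg htj]
          have hs1 : 1 ≤ codegN j t := by unfold codegN; split <;> omega
          have hs2 : codegN j t ≤ ℓ := by unfold codegN; split <;> omega
          obtain ⟨p1, p2, p3, p4, p5, p6⟩ := hΓ (codegN j t) hs1 hs2
          rw [if_neg (cofaceN_ne k _), codeg_coface, p3, coface_codeg htj]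
      · -- 1 ≤ inv' t
        split
        · omega
        · have := le_cofaceN j (Γ.inv (codegN k t))
          have := (hΓ (codegN k t) (by unfold codegN; split <;> omega)
            (by unfold codegN; split <;> omega)).2.2.2.1
          omega
      · -- inv' t ≤ ℓ + 1
        split
        · omega
        · have := cofaceN_le_succ j (Γ.inv (codegN k t))
          have := (hΓ (codegN k t) (by unfold codegN; split <;> omega)
            (by unfold codegN; split <;> omega)).2.2.2.2.1
          omega
      · -- perm' (inv' t) = t
        by_cases htk : t = k
        · subst htk; simp
        · rw [if_neg htk]
          have hs1 : 1 ≤ codegN k t := by unfold codegN; split <;> omega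
          have hs2 : codegN k t ≤ ℓ := by unfold codegN; split <;> omega
          obtain ⟨p1, p2, p3, p4, p5, p6⟩ := hΓ (codegN k t) hs1 hs2
          rw [if_neg (cofaceN_ne j _), codeg_coface, p6, coface_codeg htk]

lemma step_main (m ℓ k n : ℕ) (ψ : ℕ → ℕ) (Γ : PreTree)
    (hΓ : permWf ℓ Γ) (hψb : ∀ t, t ≤ n → ψ t ≤ ℓ) (hk : k ≤ ℓ + 1)
    (IH : ∀ α β, ψ 0 < α → α < β → β ≤ ψ n →
      (∀ c, α ≤ c → c < β → ∀ y, y ≤ n → ψ y ≠ c) →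
      (∀ γ, α ≤ γ → γ ≤ β → Γ.inv γ = Γ.inv α + (γ - α)) ∧
      (∀ t, Γ.inv α ≤ t → t < Γ.inv β → Γ.depth t = m - 1))
    (α β : ℕ) (hα0 : cofaceN k (ψ 0) < α) (hαβ : α < β) (hβ : β ≤ cofaceN k (ψ n))
    (hjump : ∀ c, α ≤ c → c < β → ∀ y, y ≤ n → cofaceN k (ψ y) ≠ c) :
    (∀ γ, α ≤ γ → γ ≤ β → (coface m ℓ k Γ).inv γ = (coface m ℓ k Γ).inv α + (γ - α)) ∧
    (∀ t, (coface m ℓ k Γ).inv α ≤ t → t < (coface m ℓ k Γ).inv β →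
      (coface m ℓ k Γ).depth t = m - 1) := by
  by_cases h0 : k = 0
  · -- left coface
    subst h0
    have hc : ∀ p, cofaceN 0 p = p + 1 := fun p => cofaceN_ge (Nat.zero_le p)
    rw [hc] at hα0
    rw [hc] at hβ
    have hα2 : 2 ≤ α := by omega
    obtain ⟨I1, I2⟩ := IH (α - 1) (β - 1) (by omega) (by omega) (by omega)
      (fun c hc1 hc2 y hy hψy => hjump (c + 1) (by omega) (by omega) y hy
        (by rw [hc, hψy]))
    simp only [coface, eq_self_iff_true, if_true]
    constructor
    · intro γ hγ1 hγ2
      rw [if_neg (by omega : ¬ γ = 1), if_neg (by omega : ¬ α = 1)]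
      have := I1 (γ - 1) (by omega) (by omega)
      omega
    · intro t ht1 ht2
      rw [if_neg (by omega : ¬ α = 1)] at ht1
      rw [if_neg (by omega : ¬ β = 1)] at ht2
      by_cases h1 : t = 1
      · rw [if_pos h1]
      · rw [if_neg h1]
        exact I2 (t - 1) (by omega) (by omega)
  · by_cases hl : k = ℓ + 1
    · -- right coface
      subst hl
      have hc : ∀ y, y ≤ n → cofaceN (ℓ + 1) (ψ y) = ψ y :=
        fun y hy => cofaceN_lt (by have := hψb y hy; omega)
      rw [hc 0 (Nat.zero_le n)] at hα0
      rw [hc n le_rfl] at hβ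
      have hβl : β ≤ ℓ := le_trans hβ (hψb n le_rfl)
      obtain ⟨I1, I2⟩ := IH α β hα0 hαβ hβ
        (fun c hc1 hc2 y hy hψy => hjump c hc1 hc2 y hy (by rw [hc y hy, hψy]))
      simp only [coface, if_neg h0, eq_self_iff_true, if_true]
      constructor
      · intro γ hγ1 hγ2
        rw [if_neg (by omega : ¬ γ = ℓ + 1), if_neg (by omega : ¬ α = ℓ + 1)]
        exact I1 γ hγ1 hγ2
      · intro t ht1 ht2
        rw [if_neg (by omega : ¬ α = ℓ + 1)] at ht1
        rw [if_neg (by omega : ¬ β = ℓ + 1)] at ht2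
        by_cases h1 : t = ℓ
        · rw [if_pos h1]
        · rw [if_neg h1]
          exact I2 t ht1 ht2
    · -- internal coface, 1 ≤ k ≤ ℓ
      have hk1 : 1 ≤ k := by omega
      have hkl : k ≤ ℓ := by omega
      obtain ⟨q1, q2, q3, q4, q5, q6⟩ := hΓ k hk1 hkl
      have hψn : ψ n ≤ ℓ := hψb n le_rfl
      have hα1 : 1 ≤ α := by omega
      simp only [coface, if_neg h0, if_neg hl]
      by_cases hA : β ≤ k
      · -- case A : the interval is left of k
        have hβψ : β ≤ ψ n := by
          by_cases h : ψ n < k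
          · rw [cofaceN_lt h] at hβ; exact hβ
          · omega
        have hα0' : ψ 0 < α := lt_of_le_of_lt (le_cofaceN k (ψ 0)) hα0
        obtain ⟨I1, I2⟩ := IH α β hα0' hαβ hβψ (fun c hc1 hc2 y hy hψy =>
          hjump c hc1 hc2 y hy (by rw [hψy, cofaceN_lt (by omega : c < k)]))
        have hAB := I1 β hαβ.le le_rfl
        by_cases hkβ : k = β
        · -- A2 : k = β
          subst hkβ
          have key : ∀ γ, α ≤ γ → γ ≤ k →
              (if γ = k then Γ.inv k else cofaceN (Γ.inv k) (Γ.inv (codegN k γ))) =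
              Γ.inv γ := by
            intro γ h1 h2
            by_cases hγ : γ = k
            · rw [if_pos hγ, hγ]
            · have e1 := I1 γ h1 h2
              rw [if_neg hγ, codegN_le h2, cofaceN_lt (by omega)]
          constructor
          · intro γ hγ1 hγ2
            rw [key γ hγ1 hγ2, key α le_rfl hαβ.le]
            exact I1 γ hγ1 hγ2
          · intro t ht1 ht2
            rw [key α le_rfl hαβ.le] at ht1
            rw [key k hαβ.le le_rfl] at ht2
            rw [if_neg (by omega : ¬ t = Γ.inv k), codegN_le (by omega : t ≤ Γ.inv k)]
            exact I2 t ht1 ht2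
        · -- A1 : β < k
          have hmid : Γ.inv k ≤ Γ.inv α ∨ Γ.inv β < Γ.inv k := by
            by_contra hcon
            push_neg at hcon
            obtain ⟨h1, h2⟩ := hcon
            have hc1 : Γ.inv (α + (Γ.inv k - Γ.inv α)) = Γ.inv k := by
              rw [I1 (α + (Γ.inv k - Γ.inv α)) (by omega) (by omega)]; omega
            have hc6 := (hΓ (α + (Γ.inv k - Γ.inv α)) (by omega) (by omega)).2.2.2.2.2
            rw [hc1, q6] at hc6
            omega
          have key : ∀ γ, α ≤ γ → γ ≤ β →
              (if γ = k then Γ.inv k else cofaceN (Γ.inv k) (Γ.inv (codegN k γ))) =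
              cofaceN (Γ.inv k) (Γ.inv γ) := by
            intro γ h1 h2
            rw [if_neg (by omega : ¬ γ = k), codegN_le (by omega : γ ≤ k)]
          rcases hmid with hm | hm
          · -- Γ.inv k ≤ Γ.inv α : everything shifts by one
            have keyv : ∀ γ, α ≤ γ → γ ≤ β → cofaceN (Γ.inv k) (Γ.inv γ) = Γ.inv γ + 1 := by
              intro γ h1 h2
              have := I1 γ h1 h2
              exact cofaceN_ge (by omega)
            constructor
            · intro γ hγ1 hγ2
              rw [key γ hγ1 hγ2, key α le_rfl hαβ.le, keyv γ hγ1 hγ2, keyv α le_rfl hαβ.le]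
              have := I1 γ hγ1 hγ2
              omega
            · intro t ht1 ht2
              rw [key α le_rfl hαβ.le, keyv α le_rfl hαβ.le] at ht1
              rw [key β hαβ.le le_rfl, keyv β hαβ.le le_rfl] at ht2
              rw [if_neg (by omega : ¬ t = Γ.inv k), codegN_gt (by omega : Γ.inv k < t)]
              exact I2 (t - 1) (by omega) (by omega)
          · -- Γ.inv β < Γ.inv k : nothing shifts
            have keyv : ∀ γ, α ≤ γ → γ ≤ β → cofaceN (Γ.inv k) (Γ.inv γ) = Γ.inv γ := by
              intro γ h1 h2
              have := I1 γ h1 h2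
              exact cofaceN_lt (by omega)
            constructor
            · intro γ hγ1 hγ2
              rw [key γ hγ1 hγ2, key α le_rfl hαβ.le, keyv γ hγ1 hγ2, keyv α le_rfl hαβ.le]
              exact I1 γ hγ1 hγ2
            · intro t ht1 ht2
              rw [key α le_rfl hαβ.le, keyv α le_rfl hαβ.le] at ht1
              rw [key β hαβ.le le_rfl, keyv β hαβ.le le_rfl] at ht2
              rw [if_neg (by omega : ¬ t = Γ.inv k), codegN_le (by omega : t ≤ Γ.inv k)]
              exact I2 t ht1 ht2
      · by_cases hB : k < α
        · -- case B : the interval is right of k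
          have hβψ : β - 1 ≤ ψ n := by have := cofaceN_le_succ k (ψ n); omega
          have hα0' : ψ 0 < α - 1 := by
            by_cases h : ψ 0 < k
            · omega
            · rw [cofaceN_ge (by omega)] at hα0; omega
          obtain ⟨I1, I2⟩ := IH (α - 1) (β - 1) hα0' (by omega) hβψ
            (fun c h1 h2 y hy hψy => hjump (c + 1) (by omega) (by omega) y hy
              (by rw [hψy, cofaceN_ge (by omega : k ≤ c)]))
          have hAB := I1 (β - 1) (by omega) le_rfl
          have hmid : Γ.inv k ≤ Γ.inv (α - 1) ∨ Γ.inv (β - 1) < Γ.inv k := by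
            by_contra hcon
            push_neg at hcon
            obtain ⟨h1, h2⟩ := hcon
            have hc1 : Γ.inv ((α - 1) + (Γ.inv k - Γ.inv (α - 1))) = Γ.inv k := by
              rw [I1 ((α - 1) + (Γ.inv k - Γ.inv (α - 1))) (by omega) (by omega)]; omega
            have hc6 := (hΓ ((α - 1) + (Γ.inv k - Γ.inv (α - 1))) (by omega) (by omega)).2.2.2.2.2
            rw [hc1, q6] at hc6
            omega
          have key : ∀ γ, α ≤ γ → γ ≤ β →
              (if γ = k then Γ.inv k else cofaceN (Γ.inv k) (Γ.inv (codegN k γ))) =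
              cofaceN (Γ.inv k) (Γ.inv (γ - 1)) := by
            intro γ h1 h2
            rw [if_neg (by omega : ¬ γ = k), codegN_gt (by omega : k < γ)]
          rcases hmid with hm | hm
          · have keyv : ∀ γ, α ≤ γ → γ ≤ β →
                cofaceN (Γ.inv k) (Γ.inv (γ - 1)) = Γ.inv (γ - 1) + 1 := by
              intro γ h1 h2
              have := I1 (γ - 1) (by omega) (by omega)
              exact cofaceN_ge (by omega)
            constructor
            · intro γ hγ1 hγ2
              rw [key γ hγ1 hγ2, key α le_rfl hαβ.le, keyv γ hγ1 hγ2, keyv α le_rfl hαβ.le]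
              have := I1 (γ - 1) (by omega) (by omega)
              omega
            · intro t ht1 ht2
              rw [key α le_rfl hαβ.le, keyv α le_rfl hαβ.le] at ht1
              rw [key β hαβ.le le_rfl, keyv β hαβ.le le_rfl] at ht2
              rw [if_neg (by omega : ¬ t = Γ.inv k), codegN_gt (by omega : Γ.inv k < t)]
              exact I2 (t - 1) (by omega) (by omega)
          · have keyv : ∀ γ, α ≤ γ → γ ≤ β →
                cofaceN (Γ.inv k) (Γ.inv (γ - 1)) = Γ.inv (γ - 1) := by
              intro γ h1 h2
              have := I1 (γ - 1) (by omega) (by omega)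
              exact cofaceN_lt (by omega)
            constructor
            · intro γ hγ1 hγ2
              rw [key γ hγ1 hγ2, key α le_rfl hαβ.le, keyv γ hγ1 hγ2, keyv α le_rfl hαβ.le]
              have := I1 (γ - 1) (by omega) (by omega)
              omega
            · intro t ht1 ht2
              rw [key α le_rfl hαβ.le, keyv α le_rfl hαβ.le] at ht1
              rw [key β hαβ.le le_rfl, keyv β hαβ.le le_rfl] at ht2
              rw [if_neg (by omega : ¬ t = Γ.inv k), codegN_le (by omega : t ≤ Γ.inv k)]
              exact I2 t ht1 ht2
        · -- case C : α ≤ k < β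
          have hCk : α ≤ k ∧ k < β := by omega
          by_cases hC0 : β = α + 1
          · -- degenerate : β = α + 1, k = α
            have hkα : k = α := by omega
            have eα : (if α = k then Γ.inv k else cofaceN (Γ.inv k) (Γ.inv (codegN k α))) =
                Γ.inv k := by rw [if_pos hkα.symm]
            have eβ : (if β = k then Γ.inv k else cofaceN (Γ.inv k) (Γ.inv (codegN k β))) =
                Γ.inv k + 1 := by
              rw [if_neg (by omega : ¬ β = k), codegN_gt (by omega : k < β),
                (by omega : β - 1 = k), cofaceN_ge le_rfl]
            constructor
            · intro γ hγ1 hγ2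
              rcases (by omega : γ = α ∨ γ = β) with h | h <;> subst h
              · rw [eα]; omega
              · rw [eβ, eα]; omega
            · intro t ht1 ht2
              rw [eα] at ht1
              rw [eβ] at ht2
              rw [if_pos (by omega : t = Γ.inv k)]
          · -- main C case : α + 1 < β
            have hβψ : β - 1 ≤ ψ n := by
              by_cases h : ψ n < k
              · rw [cofaceN_lt h] at hβ; omega
              · rw [cofaceN_ge (by omega)] at hβ; omega
            have hα0' : ψ 0 < α := lt_of_le_of_lt (le_cofaceN k (ψ 0)) hα0
            obtain ⟨I1, I2⟩ := IH α (β - 1) hα0' (by omega) hβψ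
              (fun c h1 h2 y hy hψy => by
                by_cases hck : c < k
                · exact hjump c h1 (by omega) y hy (by rw [hψy, cofaceN_lt hck])
                · exact hjump (c + 1) (by omega) (by omega) y hy
                    (by rw [hψy, cofaceN_ge (by omega)]))
            have hjk := I1 k (by omega) (by omega)
            have hB' := I1 (β - 1) (by omega) le_rfl
            have key : ∀ γ, α ≤ γ → γ ≤ β →
                (if γ = k then Γ.inv k else cofaceN (Γ.inv k) (Γ.inv (codegN k γ))) =
                Γ.inv α + (γ - α) := by
              intro γ h1 h2
              by_cases hγk : γ = k
              · rw [if_pos hγk, hjk, hγk]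
              · rw [if_neg hγk]
                by_cases hγ : γ < k
                · have e := I1 γ h1 (by omega)
                  rw [codegN_le (by omega), cofaceN_lt (by omega)]
                  omega
                · have e := I1 (γ - 1) (by omega) (by omega)
                  rw [codegN_gt (by omega), cofaceN_ge (by omega)]
                  omega
            constructor
            · intro γ hγ1 hγ2
              rw [key γ hγ1 hγ2, key α le_rfl hαβ.le]
              omega
            · intro t ht1 ht2
              rw [key α le_rfl hαβ.le] at ht1
              rw [key β hαβ.le le_rfl] at ht2
              by_cases htj : t = Γ.inv k
              · rw [if_pos htj]
              · rw [if_neg htj]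
                by_cases hlt : t < Γ.inv k
                · rw [codegN_le (by omega)]
                  exact I2 t (by omega) (by omega)
                · rw [codegN_gt (by omega)]
                  exact I2 (t - 1) (by omega) (by omega)

lemma transforms_main (m : ℕ) {n ℓ : ℕ} {ψ : ℕ → ℕ} {Λ Γ : PreTree}
    (h : Transforms m n ℓ ψ Λ Γ) :
    permWf n Λ →
    permWf ℓ Γ ∧ (∀ t, t ≤ n → ψ t ≤ ℓ) ∧
    ∀ α β, ψ 0 < α → α < β → β ≤ ψ n →
      (∀ c, α ≤ c → c < β → ∀ y, y ≤ n → ψ y ≠ c) →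
      (∀ γ, α ≤ γ → γ ≤ β → Γ.inv γ = Γ.inv α + (γ - α)) ∧
      (∀ t, Γ.inv α ≤ t → t < Γ.inv β → Γ.depth t = m - 1) := by
  induction h with
  | refl x =>
    intro hΛ
    refine ⟨hΛ, fun t ht => ht, fun α β hα0 hαβ hβ hjump => ?_⟩
    have hβn : β ≤ n := hβ
    exact absurd rfl (hjump α le_rfl hαβ α (by omega))
  | @step ℓ ψ Λ Γ k hk h ih =>
    intro hΛ
    obtain ⟨hΓ, hψb, IHm⟩ := ih hΛ
    refine ⟨permWf_coface _ _ _ _ hΓ hk, fun t ht => ?_, step_main _ _ _ _ _ _ hΓ hψb hk IHm⟩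
    have h1 := cofaceN_le_succ k (ψ t)
    have h2 := hψb t ht
    simp only []
    omega

/-- Shape-Tree Lemma, interval part: if `ψ(0) < α < β ≤ ψ(n)` and `{α,…,β−1}` is
disjoint from the image of `ψ`, then `(σ^{ψΛ})⁻¹(β) − (σ^{ψΛ})⁻¹(α) = β − α` and all
depth indices `a^{ψΛ}_t` for `(σ^{ψΛ})⁻¹(α) ≤ t ≤ (σ^{ψΛ})⁻¹(β) − 1` equal `m−1`. -/
theorem shape_tree_interval (m n ℓ : ℕ) (ψ : ℕ → ℕ) (Λ Γ : PreTree)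
    (hΛ : Λ.Wf m n) (h : Transforms m n ℓ ψ Λ Γ)
    (α β : ℕ) (hα0 : ψ 0 < α) (hαβ : α < β) (hβ : β ≤ ψ n)
    (hjump : ∀ k, α ≤ k → k < β → ∀ y ≤ n, ψ y ≠ k) :
    Γ.inv β = Γ.inv α + (β - α) ∧
    ∀ t, Γ.inv α ≤ t → t < Γ.inv β → Γ.depth t = m - 1 := by
  obtain ⟨-, -, main⟩ := transforms_main m h hΛ.1
  obtain ⟨I1, I2⟩ := main α β hα0 hαβ hβ hjump
  exact ⟨I1 β hαβ.le le_rfl, I2⟩
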